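/- Let λ be a probability vector in ℝ^d with exactly r nonzero entries, and define θ_k(λ) = max{0, −σ_min(Ω_k(λ))} where Ω_k(λ)_{ij} = k λ_i δ_{ij} − √(λ_i λ_j). Then θ_k(λ) ≤ 1 − k/r for every positive integer k ≤ r, with equality when all nonzero entries of λ equal 1/r. -/

import Mathlib

/-!
Write `s = √λ`, so that `Ω_k(λ) = diag(kλ) − s sᵀ`, and put `c = 1 − k/r`. Every eigenvalue of
`Ω_k(λ)` is at least `−c` because `xᵀ Ω_k(λ) x + c‖x‖² ≥ 0`: Cauchy–Schwarz with the weights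
`c + kλ_i` on the support of `λ` gives
`(∑ s_i x_i)² ≤ (∑ λ_i / (c + kλ_i)) · ∑ (c + kλ_i) x_i²`,
and the first factor is at most `1`, since the concave function `t ↦ t / (c + kt)` lies below its
tangent `1/r + c (t − 1/r)` at `t = 1/r`, whose sum over the support is `1`.
If `λ` is uniform on its support, `Ω_k(λ) s = (kλ_i − 1) s_i = −c s`, so `−c` is an eigenvalue.
-/

open Matrix

/-- The matrix `Ω_k(λ)` with entries `k λ_i δ_{ij} − √(λ_i λ_j)`. -/
noncomputable def OmegaMat (d k : ℕ) (lam : Fin d → ℝ) : Matrix (Fin d) (Fin d) ℝ :=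
  fun i j => (if i = j then (k : ℝ) * lam i else 0) - Real.sqrt (lam i * lam j)

open Finset

namespace Matrix.IsHermitian

variable {n : Type*} [Fintype n] [DecidableEq n] {A : Matrix n n ℝ} (hA : A.IsHermitian)
include hA

lemma le_eigenvalues_of_forall_le_dotProduct_mulVec {m : ℝ}
    (h : ∀ x : n → ℝ, m * (x ⬝ᵥ x) ≤ x ⬝ᵥ (A *ᵥ x)) (i : n) : m ≤ hA.eigenvalues i := by
  have hunit : (hA.eigenvectorBasis i : n → ℝ) ⬝ᵥ hA.eigenvectorBasis i = 1 := by
    have hinner := EuclideanSpace.inner_eq_star_dotProduct (hA.eigenvectorBasis i)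
      (hA.eigenvectorBasis i)
    rw [real_inner_self_eq_norm_sq, hA.eigenvectorBasis.orthonormal.1 i] at hinner
    simpa using hinner.symm
  simpa [hA.eigenvalues_eq i, hunit] using h (hA.eigenvectorBasis i)

lemma exists_eigenvalues_eq_of_mulVec_eq_smul {u : n → ℝ} (hu : u ≠ 0) {μ : ℝ}
    (h : A *ᵥ u = μ • u) : ∃ i, hA.eigenvalues i = μ := by
  have hμ : μ ∈ spectrum ℝ A := by
    rw [← AlgEquiv.spectrum_eq (Matrix.toLinAlgEquiv' (R := ℝ) (n := n)) A,
      ← Module.End.hasEigenvalue_iff_mem_spectrum]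
    exact Module.End.hasEigenvalue_of_hasEigenvector
      ⟨Module.End.mem_eigenspace_iff.mpr (by simpa [Matrix.toLin'_apply] using h), hu⟩
  simpa [hA.spectrum_real_eq_range_eigenvalues] using hμ

end Matrix.IsHermitian

lemma sq_sum_mul_le_sum_mul_sq {ι : Type*} {s : Finset ι} {a w : ι → ℝ}
    (hw : ∀ i ∈ s, 0 < w i) (h : ∑ i ∈ s, a i ^ 2 / w i ≤ 1) (x : ι → ℝ) :
    (∑ i ∈ s, a i * x i) ^ 2 ≤ ∑ i ∈ s, w i * x i ^ 2 := by
  have hwx : 0 ≤ ∑ i ∈ s, w i * x i ^ 2 := sum_nonneg fun i hi => by positivity [hw i hi]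
  calc (∑ i ∈ s, a i * x i) ^ 2
      ≤ (∑ i ∈ s, a i ^ 2 / w i) * ∑ i ∈ s, w i * x i ^ 2 := by
        refine sum_sq_le_sum_mul_sum_of_sq_le_mul s (fun i hi => by positivity [hw i hi])
          (fun i hi => by positivity [hw i hi]) fun i hi => le_of_eq ?_
        field_simp [(hw i hi).ne']
    _ ≤ ∑ i ∈ s, w i * x i ^ 2 := mul_le_of_le_one_left hwx h

lemma one_sub_div_add_mul_pos {r k w : ℝ} (hr : 0 < r) (hk : 0 ≤ k) (hkr : k ≤ r) (hw : 0 < w) :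
    0 < 1 - k / r + k * w := by
  rcases (div_le_one_of_le₀ hkr hr.le).lt_or_eq with hlt | heq
  · have : 0 ≤ k * w := by positivity
    linarith
  · have : k = r := by rwa [div_eq_one_iff_eq hr.ne'] at heq
    rw [heq, this]
    positivity

lemma sum_div_one_sub_div_add_mul_le_one {ι : Type*} {s : Finset ι} {w : ι → ℝ} {k : ℝ}
    (hk : 0 ≤ k) (hks : k ≤ #s) (hw : ∀ i ∈ s, 0 < w i) (hsum : ∑ i ∈ s, w i = 1) :
    ∑ i ∈ s, w i / (1 - k / #s + k * w i) ≤ 1 := by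
  have hs : (0 : ℝ) < #s := by
    rw [Nat.cast_pos, Finset.card_pos]
    exact nonempty_of_sum_ne_zero (by rw [hsum]; exact one_ne_zero)
  have hc : 0 ≤ 1 - k / #s := sub_nonneg.mpr (div_le_one_of_le₀ hks hs.le)
  have htangent : ∀ i ∈ s,
      w i / (1 - k / #s + k * w i) ≤ 1 / #s + (1 - k / #s) * (w i - 1 / #s) := by
    intro i hi
    rw [div_le_iff₀ (one_sub_div_add_mul_pos hs hk hks (hw i hi))]
    have hgap : (1 / #s + (1 - k / #s) * (w i - 1 / #s)) * (1 - k / #s + k * w i) - w i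
        = (1 - k / #s) * k * (w i - 1 / #s) ^ 2 := by
      field_simp
      ring
    nlinarith [mul_nonneg (mul_nonneg hc hk) (sq_nonneg (w i - 1 / #s))]
  calc ∑ i ∈ s, w i / (1 - k / #s + k * w i)
      ≤ ∑ i ∈ s, (1 / #s + (1 - k / #s) * (w i - 1 / #s)) := sum_le_sum htangent
    _ = 1 := by
        rw [sum_add_distrib, ← mul_sum, sum_sub_distrib, hsum]
        simp only [sum_const, nsmul_eq_mul]
        field_simp
        ring

section OmegaMat

variable {d : ℕ} {lam : Fin d → ℝ}

lemma OmegaMat_eq_diagonal_sub_vecMulVec (k : ℕ) (hlam : ∀ i, 0 ≤ lam i) :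
    OmegaMat d k lam =
      diagonal (fun i => k * lam i) - vecMulVec (fun i => √(lam i)) (fun i => √(lam i)) := by
  ext i j
  simp only [OmegaMat, Matrix.sub_apply, diagonal_apply, vecMulVec_apply, Real.sqrt_mul (hlam i)]

lemma dotProduct_OmegaMat_mulVec (k : ℕ) (hlam : ∀ i, 0 ≤ lam i) (x : Fin d → ℝ) :
    x ⬝ᵥ (OmegaMat d k lam *ᵥ x) = ∑ i, k * lam i * x i ^ 2 - (∑ i, √(lam i) * x i) ^ 2 := by
  rw [OmegaMat_eq_diagonal_sub_vecMulVec k hlam, sub_mulVec, dotProduct_sub, vecMulVec_mulVec]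
  simp only [op_smul_eq_smul, dotProduct_comm x, smul_dotProduct, smul_eq_mul, sq]
  simp only [dotProduct, mulVec_diagonal]
  congr 1
  exact sum_congr rfl fun i _ => by ring

lemma OmegaMat_mulVec_sqrt (k : ℕ) (hlam : ∀ i, 0 ≤ lam i) (hsum : ∑ i, lam i = 1) :
    OmegaMat d k lam *ᵥ (fun i => √(lam i)) = fun i => (k * lam i - 1) * √(lam i) := by
  have hunit : (fun i => √(lam i)) ⬝ᵥ (fun i => √(lam i)) = 1 := by
    simpa [dotProduct, Real.mul_self_sqrt (hlam _)] using hsum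
  rw [OmegaMat_eq_diagonal_sub_vecMulVec k hlam, sub_mulVec, vecMulVec_mulVec, hunit]
  ext i
  simp only [MulOpposite.op_one, one_smul, Pi.sub_apply, mulVec_diagonal]
  ring

lemma OmegaMat_mulVec_sqrt_of_uniform (k : ℕ) {r : ℕ} (hlam : ∀ i, 0 ≤ lam i)
    (hsum : ∑ i, lam i = 1) (huniform : ∀ i, lam i ≠ 0 → lam i = 1 / r) :
    OmegaMat d k lam *ᵥ (fun i => √(lam i)) = (-(1 - k / r : ℝ)) • fun i => √(lam i) := by
  rw [OmegaMat_mulVec_sqrt k hlam hsum]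
  ext i
  by_cases hi : lam i = 0
  · simp [hi]
  · simp only [huniform i hi, Pi.smul_apply, smul_eq_mul]
    ring

lemma sq_sum_sqrt_mul_le {k : ℝ} {r : ℕ} (hk : 0 ≤ k) (hkr : k ≤ r) (hlam : ∀ i, 0 ≤ lam i)
    (hsum : ∑ i, lam i = 1) (hr : (univ.filter fun i => lam i ≠ 0).card = r) (x : Fin d → ℝ) :
    (∑ i, √(lam i) * x i) ^ 2 ≤ ∑ i, (1 - k / r + k * lam i) * x i ^ 2 := by
  set S := univ.filter fun i => lam i ≠ 0
  have hlamS : ∀ i ∈ S, 0 < lam i := fun i hi => (hlam i).lt_of_ne' (mem_filter.mp hi).2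
  have hsumS : ∑ i ∈ S, lam i = 1 := by rw [sum_filter_ne_zero, hsum]
  have hrpos : (0 : ℝ) < r := by
    rw [← hr, Nat.cast_pos, card_pos]
    exact nonempty_of_sum_ne_zero (by rw [hsumS]; exact one_ne_zero)
  have hweights : ∑ i ∈ S, √(lam i) ^ 2 / (1 - k / r + k * lam i) ≤ 1 := by
    simp only [Real.sq_sqrt (hlam _), ← hr]
    exact sum_div_one_sub_div_add_mul_le_one hk (hr ▸ hkr) hlamS hsumS
  calc (∑ i, √(lam i) * x i) ^ 2 = (∑ i ∈ S, √(lam i) * x i) ^ 2 := by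
        congr 1
        refine (sum_filter_of_ne (p := fun i => lam i ≠ 0) fun i _ h hi => h ?_).symm
        rw [hi, Real.sqrt_zero, zero_mul]
    _ ≤ ∑ i ∈ S, (1 - k / r + k * lam i) * x i ^ 2 := sq_sum_mul_le_sum_mul_sq
        (fun i hi => one_sub_div_add_mul_pos hrpos hk hkr (hlamS i hi)) hweights x
    _ ≤ ∑ i, (1 - k / r + k * lam i) * x i ^ 2 := by
        refine sum_le_sum_of_subset_of_nonneg (subset_univ S) fun i _ hi => ?_
        have hc : 0 ≤ 1 - k / r := sub_nonneg.mpr (div_le_one_of_le₀ hkr hrpos.le)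
        simp only [S, mem_filter, mem_univ, true_and, not_not] at hi
        simp only [hi, mul_zero, add_zero]
        positivity

lemma neg_mul_le_dotProduct_OmegaMat_mulVec {k r : ℕ} (hkr : k ≤ r) (hlam : ∀ i, 0 ≤ lam i)
    (hsum : ∑ i, lam i = 1) (hr : (univ.filter fun i => lam i ≠ 0).card = r) (x : Fin d → ℝ) :
    -(1 - k / r : ℝ) * (x ⬝ᵥ x) ≤ x ⬝ᵥ (OmegaMat d k lam *ᵥ x) := by
  have hbound := sq_sum_sqrt_mul_le k.cast_nonneg (Nat.cast_le.mpr hkr) hlam hsum hr x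
  rw [dotProduct_OmegaMat_mulVec k hlam]
  simp only [add_mul, sum_add_distrib, mul_assoc, ← mul_sum] at hbound ⊢
  simp only [dotProduct, ← sq]
  linarith

end OmegaMat

theorem stmt6_general (d k r : ℕ) (hkr : k ≤ r) (lam : Fin d → ℝ)
    (hnonneg : ∀ i, 0 ≤ lam i) (hsum : ∑ i, lam i = 1)
    (hr : (Finset.univ.filter fun i => lam i ≠ 0).card = r)
    (hH : (OmegaMat d k lam).IsHermitian) :
    max 0 (-(⨅ i, hH.eigenvalues i)) ≤ 1 - (k : ℝ) / r ∧
      ((∀ i, lam i ≠ 0 → lam i = 1 / r) →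
        max 0 (-(⨅ i, hH.eigenvalues i)) = 1 - (k : ℝ) / r) := by
  have hc : 0 ≤ 1 - (k : ℝ) / r :=
    sub_nonneg.mpr (div_le_one_of_le₀ (Nat.cast_le.mpr hkr) r.cast_nonneg)
  obtain ⟨i₀, -, hi₀⟩ := exists_ne_zero_of_sum_ne_zero (hsum ▸ one_ne_zero : ∑ i, lam i ≠ 0)
  have : Nonempty (Fin d) := ⟨i₀⟩
  have hlower : ∀ i, -(1 - (k : ℝ) / r) ≤ hH.eigenvalues i :=
    hH.le_eigenvalues_of_forall_le_dotProduct_mulVec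
      (neg_mul_le_dotProduct_OmegaMat_mulVec hkr hnonneg hsum hr)
  refine ⟨max_le hc (by linarith [le_ciInf hlower]), fun huniform => ?_⟩
  have hsqrt : (fun i => √(lam i)) ≠ 0 := fun h =>
    hi₀ ((Real.sqrt_eq_zero (hnonneg i₀)).mp (congrFun h i₀))
  obtain ⟨j, hj⟩ := hH.exists_eigenvalues_eq_of_mulVec_eq_smul hsqrt
    (OmegaMat_mulVec_sqrt_of_uniform k hnonneg hsum huniform)
  have hmin : ⨅ i, hH.eigenvalues i = -(1 - (k : ℝ) / r) :=
    le_antisymm (hj ▸ ciInf_le (Set.finite_range _).bddBelow j) (le_ciInf hlower)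
  rw [hmin, neg_neg, max_eq_right hc]

theorem stmt6 (d k r : ℕ) (hk : 0 < k) (hkr : k ≤ r) (lam : Fin d → ℝ)
    (hnonneg : ∀ i, 0 ≤ lam i) (hsum : ∑ i, lam i = 1)
    (hr : (Finset.univ.filter fun i => lam i ≠ 0).card = r)
    (hH : (OmegaMat d k lam).IsHermitian) :
    max 0 (-(⨅ i, hH.eigenvalues i)) ≤ 1 - (k : ℝ) / r ∧
      ((∀ i, lam i ≠ 0 → lam i = 1 / r) →
        max 0 (-(⨅ i, hH.eigenvalues i)) = 1 - (k : ℝ) / r) :=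
  stmt6_general d k r hkr lam hnonneg hsum hr hH
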